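/- For every positive integer N, the number of pairs (a,b) ∈ ℤ × ℤ with a² − a·b + b² = N equals 6·(d₁(N) − d₂(N)), where d₁(N) is the number of positive divisors of N congruent to 1 modulo 3 and d₂(N) is the number of positive divisors of N congruent to 2 modulo 3. -/

import Mathlib

/-- Eisenstein integers: `a + b ω` with `ω` a primitive cube root of unity. -/
structure Eis where
  u : ℤ
  v : ℤ
deriving DecidableEq

namespace Eis

instance : Zero Eis := ⟨⟨0, 0⟩⟩
instance : One Eis := ⟨⟨1, 0⟩⟩
instance : Add Eis := ⟨fun z w => ⟨z.u + w.u, z.v + w.v⟩⟩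
instance : Neg Eis := ⟨fun z => ⟨-z.u, -z.v⟩⟩
instance : Mul Eis := ⟨fun z w => ⟨z.u * w.u - z.v * w.v, z.u * w.v + z.v * w.u - z.v * w.v⟩⟩

@[simp] lemma zero_u : (0 : Eis).u = 0 := rfl
@[simp] lemma zero_v : (0 : Eis).v = 0 := rfl
@[simp] lemma one_u : (1 : Eis).u = 1 := rfl
@[simp] lemma one_v : (1 : Eis).v = 0 := rfl
@[simp] lemma add_u (z w : Eis) : (z + w).u = z.u + w.u := rfl
@[simp] lemma add_v (z w : Eis) : (z + w).v = z.v + w.v := rfl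
@[simp] lemma neg_u (z : Eis) : (-z).u = -z.u := rfl
@[simp] lemma neg_v (z : Eis) : (-z).v = -z.v := rfl
@[simp] lemma mul_u (z w : Eis) : (z * w).u = z.u * w.u - z.v * w.v := rfl
@[simp] lemma mul_v (z w : Eis) : (z * w).v = z.u * w.v + z.v * w.u - z.v * w.v := rfl

@[ext] lemma ext' {z w : Eis} (h1 : z.u = w.u) (h2 : z.v = w.v) : z = w := by
  cases z; cases w; simp_all

instance instCommRing : CommRing Eis where
  add_assoc := by intros; ext <;> simp <;> ring
  zero_add := by intros; ext <;> simp
  add_zero := by intros; ext <;> simp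
  add_comm := by intros; ext <;> simp <;> ring
  mul_assoc := by intros; ext <;> simp <;> ring
  one_mul := by intros; ext <;> simp
  mul_one := by intros; ext <;> simp
  left_distrib := by intros; ext <;> simp <;> ring
  right_distrib := by intros; ext <;> simp <;> ring
  zero_mul := by intros; ext <;> simp
  mul_zero := by intros; ext <;> simp
  mul_comm := by intros; ext <;> simp <;> ring
  neg_add_cancel := by intros; ext <;> simp
  nsmul := fun n z => ⟨n * z.u, n * z.v⟩
  nsmul_zero := by intros; ext <;> show ((0:ℕ):ℤ) * _ = _ <;> simp
  nsmul_succ := by intros; ext <;> show ((_ + 1 : ℕ) : ℤ) * _ = (_ : ℤ) * _ + _ <;> push_cast <;> ring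
  zsmul := fun n z => ⟨n * z.u, n * z.v⟩
  zsmul_zero' := by intros; ext <;> show (0:ℤ) * _ = _ <;> simp
  zsmul_succ' := by intros; ext <;> show (_ : ℤ) * _ = (_ : ℤ) * _ + _ <;> push_cast <;> ring
  zsmul_neg' := by intros; ext <;> show (_ : ℤ) * _ = -((_ : ℤ) * _) <;> simp [Int.negSucc_eq] <;> ring
  natCast := fun n => ⟨n, 0⟩
  natCast_zero := by ext <;> simp
  natCast_succ := by
    intro n; ext
    · show ((n + 1 : ℕ) : ℤ) = (n : ℤ) + 1; push_cast; ring
    · show (0 : ℤ) = 0 + 0; simp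
  intCast := fun n => ⟨n, 0⟩
  intCast_ofNat := fun n => rfl
  intCast_negSucc := by
    intro n; ext
    · show Int.negSucc n = -((n + 1 : ℕ) : ℤ); simp [Int.negSucc_eq]
    · show (0 : ℤ) = -0; simp

instance : Nontrivial Eis := ⟨⟨0, 1, by decide⟩⟩

@[simp] lemma sub_u (z w : Eis) : (z - w).u = z.u - w.u := by
  rw [sub_eq_add_neg, sub_eq_add_neg]; rfl
@[simp] lemma sub_v (z w : Eis) : (z - w).v = z.v - w.v := by
  rw [sub_eq_add_neg, sub_eq_add_neg]; rfl

@[simp] lemma intCast_u (n : ℤ) : (n : Eis).u = n := rfl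
@[simp] lemma intCast_v (n : ℤ) : (n : Eis).v = 0 := rfl

@[simp] lemma natCast_u (n : ℕ) : (n : Eis).u = n := by
  rw [← Int.cast_natCast, intCast_u]
@[simp] lemma natCast_v (n : ℕ) : (n : Eis).v = 0 := by
  rw [← Int.cast_natCast, intCast_v]

/-- Conjugation. -/
def conj : Eis →+* Eis where
  toFun z := ⟨z.u - z.v, -z.v⟩
  map_one' := by ext <;> simp
  map_mul' := by intros; ext <;> simp <;> ring
  map_zero' := by ext <;> simp
  map_add' := by intros; ext <;> simp <;> ring

@[simp] lemma conj_u (z : Eis) : (conj z).u = z.u - z.v := rfl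
@[simp] lemma conj_v (z : Eis) : (conj z).v = -z.v := rfl

/-- The norm. -/
def norm (z : Eis) : ℤ := z.u ^ 2 - z.u * z.v + z.v ^ 2

@[simp] lemma norm_mul (z w : Eis) : norm (z * w) = norm z * norm w := by
  simp [norm]; ring

@[simp] lemma norm_one : norm 1 = 1 := by simp [norm]
@[simp] lemma norm_zero : norm 0 = 0 := by simp [norm]
@[simp] lemma norm_conj (z : Eis) : norm (conj z) = norm z := by simp [norm]; ring

lemma norm_nonneg (z : Eis) : 0 ≤ norm z := by
  have := sq_nonneg (2 * z.u - z.v); have := sq_nonneg z.v; simp [norm] at *; nlinarith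

lemma norm_eq_zero_iff {z : Eis} : norm z = 0 ↔ z = 0 := by
  constructor
  · intro h
    have h1 := sq_nonneg (2 * z.u - z.v); have h2 := sq_nonneg z.v
    simp [norm] at h
    have hv : z.v = 0 := by nlinarith
    have hu : z.u = 0 := by nlinarith
    ext <;> simp [hu, hv]
  · rintro rfl; simp

lemma norm_pos {z : Eis} (h : z ≠ 0) : 0 < norm z :=
  lt_of_le_of_ne (norm_nonneg z) (fun hc => h (norm_eq_zero_iff.mp hc.symm))

lemma mul_conj (z : Eis) : z * conj z = (norm z : Eis) := by
  ext <;> simp only [mul_u, mul_v, conj_u, conj_v, intCast_u, intCast_v, norm] <;> ring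

instance : NoZeroDivisors Eis where
  eq_zero_or_eq_zero_of_mul_eq_zero := by
    intro a b h
    by_contra hc
    push_neg at hc
    have h1 := norm_pos hc.1
    have h2 := norm_pos hc.2
    have h3 : norm (a * b) = 0 := by rw [h]; simp
    rw [norm_mul] at h3
    nlinarith

instance : IsDomain Eis := NoZeroDivisors.to_isDomain _

lemma norm_natCast (n : ℕ) : norm (n : Eis) = n ^ 2 := by simp [norm]

end Eis
namespace Eis

noncomputable instance : Div Eis :=
  ⟨fun z w => ⟨round ((z * conj w).u / (norm w : ℚ)), round ((z * conj w).v / (norm w : ℚ))⟩⟩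

lemma div_def (z w : Eis) :
    z / w = ⟨round ((z * conj w).u / (norm w : ℚ)), round ((z * conj w).v / (norm w : ℚ))⟩ := rfl

noncomputable instance : Mod Eis := ⟨fun z w => z - w * (z / w)⟩

lemma mod_def (z w : Eis) : z % w = z - w * (z / w) := rfl

lemma round_bound (A n : ℤ) (hn : 0 < n) : 2 * |A - round ((A : ℚ) / n) * n| ≤ n := by
  have hnq : (0 : ℚ) < n := by exact_mod_cast hn
  set r : ℤ := round ((A : ℚ) / n) with hr
  have h1 : |(A : ℚ) / n - r| ≤ 1 / 2 := abs_sub_round _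
  have h2 : ((A : ℚ) - r * n) = ((A : ℚ) / n - r) * n := by field_simp
  have h3 : |(A : ℚ) - r * n| ≤ n / 2 := by
    rw [h2, abs_mul, abs_of_pos hnq]
    calc |(A : ℚ) / n - r| * n ≤ (1 / 2) * n := mul_le_mul_of_nonneg_right h1 hnq.le
    _ = n / 2 := by ring
  have h4 : ((2 * |A - r * n| : ℤ) : ℚ) ≤ ((n : ℤ) : ℚ) := by push_cast; linarith
  exact_mod_cast h4

lemma norm_mod_lt (z : Eis) {w : Eis} (hw : w ≠ 0) : norm (z % w) < norm w := by
  have hn : 0 < norm w := norm_pos hw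
  set A := (z * conj w).u with hA
  set B := (z * conj w).v with hB
  set qa : ℤ := round ((A : ℚ) / (norm w : ℚ)) with hqa
  set qb : ℤ := round ((B : ℚ) / (norm w : ℚ)) with hqb
  have hq : z / w = ⟨qa, qb⟩ := rfl
  set X := A - qa * norm w with hX
  set Y := B - qb * norm w with hY
  have hmul : (z % w) * conj w = ⟨X, Y⟩ := by
    have e1 : (z % w) * conj w = z * conj w - (z / w) * (w * conj w) := by
      rw [mod_def]; ring
    rw [e1, mul_conj, hq]
    ext <;> simp [hX, hY, hA, hB, mul_comm]
  have key : norm (z % w) * norm w = X ^ 2 - X * Y + Y ^ 2 := by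
    calc norm (z % w) * norm w = norm ((z % w) * conj w) := by rw [norm_mul, norm_conj]
    _ = X ^ 2 - X * Y + Y ^ 2 := by rw [hmul]; rfl
  have bA : 2 * |X| ≤ norm w := round_bound A (norm w) hn
  have bB : 2 * |Y| ≤ norm w := round_bound B (norm w) hn
  have habs : X ^ 2 - X * Y + Y ^ 2 < norm w * norm w := by
    nlinarith [sq_abs X, sq_abs Y, abs_mul X Y, neg_abs_le (X * Y), abs_nonneg X, abs_nonneg Y]
  have : norm (z % w) * norm w < norm w * norm w := by rw [key]; exact habs
  exact lt_of_mul_lt_mul_right this hn.le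

lemma natAbs_norm_mod_lt (z : Eis) {w : Eis} (hw : w ≠ 0) :
    (norm (z % w)).natAbs < (norm w).natAbs :=
  Int.natAbs_lt_natAbs_of_nonneg_of_lt (norm_nonneg _) (norm_mod_lt z hw)

lemma natAbs_norm_le_mul (z : Eis) {w : Eis} (hw : w ≠ 0) :
    (norm z).natAbs ≤ (norm (z * w)).natAbs := by
  rw [norm_mul, Int.natAbs_mul]
  exact Nat.le_mul_of_pos_right _ (Int.natAbs_pos.mpr (fun h => hw (norm_eq_zero_iff.mp h)))

noncomputable instance : EuclideanDomain Eis :=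
  { Eis.instCommRing, (inferInstance : Nontrivial Eis) with
    quotient := (· / ·)
    remainder := (· % ·)
    quotient_zero := fun z => by
      show z / 0 = 0
      rw [div_def]
      norm_num
      rfl
    quotient_mul_add_remainder_eq := fun a b => by show b * (a / b) + (a - b * (a / b)) = a; ring
    r := fun a b => (norm a).natAbs < (norm b).natAbs
    r_wellFounded := (measure fun z : Eis => (norm z).natAbs).wf
    remainder_lt := fun a b hb => natAbs_norm_mod_lt a hb
    mul_left_not_lt := fun a b hb => not_lt_of_ge (natAbs_norm_le_mul a hb) }

end Eis
namespace Eis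

lemma isUnit_iff_norm {z : Eis} : IsUnit z ↔ norm z = 1 := by
  constructor
  · rintro ⟨U, rfl⟩
    have h : norm (U : Eis) * norm ((U⁻¹ : Eisˣ) : Eis) = 1 := by
      rw [← norm_mul]
      simp
    have h1 := norm_nonneg (U : Eis)
    exact Int.eq_one_of_mul_eq_one_right h1 h
  · intro h
    refine IsUnit.of_mul_eq_one (conj z) ?_
    rw [mul_conj, h, Int.cast_one]

lemma prime_of_norm_prime {z : Eis} (hp : Prime (norm z)) : Prime z := by
  rw [← irreducible_iff_prime]
  constructor
  · rw [isUnit_iff_norm]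
    exact fun h => hp.not_unit (h ▸ isUnit_one)
  · intro x y hxy
    have h := hp.irreducible.isUnit_or_isUnit (by rw [hxy, norm_mul])
    rcases h with h | h
    · left
      rw [isUnit_iff_norm]
      rcases Int.isUnit_iff.mp h with h1 | h1
      · exact h1
      · have := norm_nonneg x; omega
    · right
      rw [isUnit_iff_norm]
      rcases Int.isUnit_iff.mp h with h1 | h1
      · exact h1
      · have := norm_nonneg y; omega

/-- If `s² + s + 1 = 0` has a solution mod `p` then `p = 3` or `p ≡ 1 mod 3`. -/
lemma mod_three_of_root (p : ℕ) [hp : Fact p.Prime] {s : ZMod p}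
    (hs : s ^ 2 + s + 1 = 0) : p = 3 ∨ p % 3 = 1 := by
  by_cases h3 : p = 3
  · left; exact h3
  right
  have h3' : (3 : ZMod p) ≠ 0 := by
    intro h
    have := (ZMod.natCast_eq_zero_iff 3 p).mp (by exact_mod_cast h)
    rcases (Nat.prime_dvd_prime_iff_eq hp.out Nat.prime_three).mp this with rfl
    exact h3 rfl
  have hs1 : s ≠ 1 := by
    rintro rfl
    apply h3'
    have : (3 : ZMod p) = 1 ^ 2 + 1 + 1 := by ring
    rw [this, hs]
  have hs0 : s ≠ 0 := by
    rintro rfl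
    simp at hs
  have hcube : s ^ 3 = 1 := by
    have : s ^ 3 - 1 = (s - 1) * (s ^ 2 + s + 1) := by ring
    have h0 : s ^ 3 - 1 = 0 := by rw [this, hs, mul_zero]
    linear_combination h0
  have hU : IsUnit s := hs0.isUnit
  set u := hU.unit with hu
  have hcu : u ^ 3 = 1 := by
    ext
    push_cast
    simpa [u] using hcube
  have hord : orderOf u = 3 := by
    have hdvd := orderOf_dvd_of_pow_eq_one hcu
    have : orderOf u = 1 ∨ orderOf u = 3 := (Nat.dvd_prime Nat.prime_three).mp hdvd
    rcases this with h | h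
    · exfalso
      rw [orderOf_eq_one_iff] at h
      exact hs1 (by rw [← hU.unit_spec, ← hu, h, Units.val_one])
    · exact h
  have hdvd3 : 3 ∣ Fintype.card (ZMod p)ˣ := hord ▸ orderOf_dvd_card
  rw [ZMod.card_units_eq_totient, Nat.totient_prime hp.out] at hdvd3
  have := hp.out.two_le
  omega

/-- If `p ≡ 1 mod 3` then `s² + s + 1 = 0` has a solution mod `p`. -/
lemma root_of_mod_three (p : ℕ) [hp : Fact p.Prime] (h : p % 3 = 1) :
    ∃ s : ZMod p, s ^ 2 + s + 1 = 0 := by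
  have hdvd : 3 ∣ Fintype.card (ZMod p)ˣ := by
    rw [ZMod.card_units_eq_totient, Nat.totient_prime hp.out]
    have := hp.out.two_le
    omega
  haveI : Fact (Nat.Prime 3) := ⟨Nat.prime_three⟩
  obtain ⟨u, hu⟩ := exists_prime_orderOf_dvd_card 3 hdvd
  refine ⟨(u : ZMod p), ?_⟩
  have hcube : (u : ZMod p) ^ 3 = 1 := by
    have := pow_orderOf_eq_one u
    rw [hu] at this
    simpa using congrArg (Units.val) this
  have hne : (u : ZMod p) ≠ 1 := by
    intro h1
    have : u = 1 := Units.ext h1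
    rw [this, orderOf_one] at hu
    omega
  have hfac : ((u : ZMod p) - 1) * ((u : ZMod p) ^ 2 + (u : ZMod p) + 1) = 0 := by
    linear_combination hcube
  rcases mul_eq_zero.mp hfac with h' | h'
  · exact absurd (by linear_combination h') hne
  · exact h'

/-- Inert primes: if `p ≡ 2 mod 3` and `p ∣ a² - ab + b²` then `p ∣ a` and `p ∣ b`. -/
lemma inert_dvd (p : ℕ) (hp : p.Prime) (h2 : p % 3 = 2) {a b : ℤ}
    (h : (p : ℤ) ∣ a ^ 2 - a * b + b ^ 2) : (p : ℤ) ∣ a ∧ (p : ℤ) ∣ b := by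
  haveI : Fact p.Prime := ⟨hp⟩
  have hz : (a : ZMod p) ^ 2 - (a : ZMod p) * b + (b : ZMod p) ^ 2 = 0 := by
    have := (ZMod.intCast_zmod_eq_zero_iff_dvd _ p).mpr h
    push_cast at this
    exact this
  have hb : (b : ZMod p) = 0 := by
    by_contra hb
    set s : ZMod p := -((a : ZMod p) / b) with hs
    have : s ^ 2 + s + 1 = 0 := by
      have hbu : (b : ZMod p) ≠ 0 := hb
      rw [hs]
      field_simp
      linear_combination hz
    rcases mod_three_of_root p this with h' | h' <;> omega
  have ha2 : (a : ZMod p) ^ 2 = 0 := by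
    linear_combination hz + ((a : ZMod p) - b) * hb
  have ha : (a : ZMod p) = 0 := pow_eq_zero_iff (two_ne_zero) |>.mp ha2
  constructor
  · exact (ZMod.intCast_zmod_eq_zero_iff_dvd _ p).mp ha
  · exact (ZMod.intCast_zmod_eq_zero_iff_dvd _ p).mp hb

/-- Split primes: if `p ≡ 1 mod 3` there is an Eisenstein integer of norm `p`. -/
lemma exists_norm_eq (p : ℕ) (hp : p.Prime) (h1 : p % 3 = 1) :
    ∃ π : Eis, norm π = p := by
  haveI : Fact p.Prime := ⟨hp⟩
  obtain ⟨s, hs⟩ := root_of_mod_three p h1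
  obtain ⟨S, hSs⟩ : ∃ S : ℤ, (S : ZMod p) = s := ⟨(s.val : ℤ), by push_cast; rw [ZMod.natCast_val, ZMod.cast_id]⟩
  have hdvd : (p : ℤ) ∣ S ^ 2 + S + 1 := by
    rw [← ZMod.intCast_zmod_eq_zero_iff_dvd]
    push_cast
    rw [hSs]
    exact hs
  set ζ : Eis := ⟨S, -1⟩ with hζ
  have hnζ : norm ζ = S ^ 2 + S + 1 := by simp [norm, hζ]
  have hpζ : (p : Eis) ∣ ζ * conj ζ := by
    rw [mul_conj, hnζ]
    obtain ⟨c, hc⟩ := hdvd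
    exact ⟨(c : Eis), by rw [hc]; push_cast; ring_nf⟩
  have hnp : ¬ Prime (p : Eis) := by
    intro hpr
    rcases hpr.2.2 _ _ hpζ with h' | h'
    · obtain ⟨t, ht⟩ := h'
      have hv : (-1 : ℤ) = p * t.v := by
        have := congrArg Eis.v ht
        simpa [hζ] using this
      have hge := hp.two_le
      have hdd : (p : ℤ) ∣ 1 := ⟨-t.v, by linarith⟩
      have := Int.le_of_dvd one_pos hdd
      omega
    · obtain ⟨t, ht⟩ := h'
      have hv : (1 : ℤ) = p * t.v := by
        have := congrArg Eis.v ht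
        simpa [hζ] using this
      have hge := hp.two_le
      have hdd : (p : ℤ) ∣ 1 := ⟨t.v, by linarith⟩
      have := Int.le_of_dvd one_pos hdd
      omega
  have hnu : ¬ IsUnit (p : Eis) := by
    rw [isUnit_iff_norm, norm_natCast]
    have := hp.two_le
    nlinarith [sq_nonneg (p : ℤ)]
  have hnirr : ¬ Irreducible (p : Eis) := fun h => hnp (irreducible_iff_prime.mp h)
  rw [irreducible_iff] at hnirr
  push_neg at hnirr
  obtain ⟨x, y, hxy, hx, hy⟩ := hnirr hnu
  have hnm : norm x * norm y = (p : ℤ) ^ 2 := by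
    rw [← norm_mul, ← hxy, norm_natCast]
  have hpne : ((p : ℤ)) ^ 2 ≠ 0 := by
    have := hp.pos
    positivity
  have hx0 : x ≠ 0 := by rintro rfl; rw [norm_zero, zero_mul] at hnm; exact hpne hnm.symm
  have hxpos : 0 < norm x := norm_pos hx0
  have hy0 : y ≠ 0 := by
    rintro rfl
    rw [norm_zero, mul_zero] at hnm
    exact hpne hnm.symm
  have hypos : 0 < norm y := norm_pos hy0
  have hxd : (norm x).natAbs ∣ p ^ 2 := by
    have : (norm x).natAbs * (norm y).natAbs = p ^ 2 := by
      have := congrArg Int.natAbs hnm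
      rwa [Int.natAbs_mul, Int.natAbs_pow, Int.natAbs_natCast] at this
    exact ⟨_, this.symm⟩
  obtain ⟨i, hi, hie⟩ := (Nat.dvd_prime_pow hp).mp hxd
  interval_cases i
  · exfalso
    apply hx
    rw [isUnit_iff_norm]
    simp at hie
    omega
  · refine ⟨x, ?_⟩
    rw [pow_one] at hie
    omega
  · exfalso
    apply hy
    rw [isUnit_iff_norm]
    have : (norm x).natAbs * (norm y).natAbs = p ^ 2 := by
      have := congrArg Int.natAbs hnm
      rwa [Int.natAbs_mul, Int.natAbs_pow, Int.natAbs_natCast] at this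
    rw [hie] at this
    have hp2 : 0 < p ^ 2 := by have := hp.pos; positivity
    have hy1 : (norm y).natAbs = 1 := by
      apply Nat.eq_of_mul_eq_mul_left hp2
      rw [this, mul_one]
    omega

end Eis
open Finset in
/-- Solutions of `a² - ab + b² = N` as a finset. -/
noncomputable def sols (N : ℕ) : Finset (ℤ × ℤ) :=
  ((Finset.Icc (-(N : ℤ)) N) ×ˢ (Finset.Icc (-(N : ℤ)) N)).filter
    (fun p => p.1 ^ 2 - p.1 * p.2 + p.2 ^ 2 = (N : ℤ))

lemma mem_sols {N : ℕ} {p : ℤ × ℤ} :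
    p ∈ sols N ↔ p.1 ^ 2 - p.1 * p.2 + p.2 ^ 2 = (N : ℤ) := by
  unfold sols
  rw [Finset.mem_filter, Finset.mem_product, Finset.mem_Icc, Finset.mem_Icc]
  constructor
  · rintro ⟨-, h⟩; exact h
  · intro h
    refine ⟨⟨⟨?_, ?_⟩, ?_, ?_⟩, h⟩ <;>
      nlinarith [sq_nonneg (p.1 - 2 * p.2), sq_nonneg (p.2 - 2 * p.1),
        sq_nonneg (3 * p.1 - 2), sq_nonneg (3 * p.1 + 2),
        sq_nonneg (3 * p.2 - 2), sq_nonneg (3 * p.2 + 2), Int.natCast_nonneg N]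

lemma sols_one : (sols 1).card = 6 := by decide

lemma dvd_three_of_sol {c d e : ℤ} (h : c ^ 2 - c * d + d ^ 2 = 3 * e) :
    (3 : ℤ) ∣ c + d := by
  have key : ∀ x y : ZMod 3, x ^ 2 - x * y + y ^ 2 = 0 → x + y = 0 := by decide
  have h0 : ((c + d : ℤ) : ZMod 3) = 0 := by
    push_cast
    refine key _ _ ?_
    have := congrArg (Int.cast : ℤ → ZMod 3) h
    push_cast at this
    rw [this]
    have h3 : (3 : ZMod 3) = 0 := by decide
    rw [h3, zero_mul]
  exact_mod_cast (ZMod.intCast_zmod_eq_zero_iff_dvd (c + d) 3).mp h0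

lemma card_sols_three_mul (M : ℕ) : (sols (3 * M)).card = (sols M).card := by
  refine Finset.card_bij' (fun q _ => ((2 * q.1 - q.2) / 3, (q.1 + q.2) / 3))
    (fun q _ => (q.1 + q.2, 2 * q.2 - q.1)) ?_ ?_ ?_ ?_
  · -- forward: sols (3M) → sols M
    intro q hq
    rw [mem_sols] at hq ⊢
    dsimp only
    push_cast at hq
    have hd : (3 : ℤ) ∣ q.1 + q.2 := dvd_three_of_sol hq
    obtain ⟨l, hl⟩ := hd
    have hd2 : (3 : ℤ) ∣ 2 * q.1 - q.2 := ⟨q.1 - l, by linarith⟩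
    obtain ⟨k, hk⟩ := hd2
    have e1 : (2 * q.1 - q.2) / 3 = k := by omega
    have e2 : (q.1 + q.2) / 3 = l := by omega
    rw [e1, e2]
    have h9 : 9 * (k ^ 2 - k * l + l ^ 2) = 9 * (M : ℤ) := by
      linear_combination (3 * k + (2 * q.1 - q.2) - 3 * l) * hk.symm
        + (3 * l + (q.1 + q.2) - (2 * q.1 - q.2)) * hl.symm + 3 * hq
    linarith
  · -- backward: sols M → sols (3M)
    intro q hq
    rw [mem_sols] at hq ⊢
    dsimp only
    push_cast
    linear_combination 3 * hq
  · intro q hq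
    rw [mem_sols] at hq
    push_cast at hq
    have hd : (3 : ℤ) ∣ q.1 + q.2 := dvd_three_of_sol hq
    obtain ⟨l, hl⟩ := hd
    have hd2 : (3 : ℤ) ∣ 2 * q.1 - q.2 := ⟨q.1 - l, by linarith⟩
    obtain ⟨k, hk⟩ := hd2
    dsimp only
    ext <;> dsimp only <;> omega
  · intro q hq
    dsimp only
    ext <;> dsimp only <;> omega

lemma sols_inert_one {p N : ℕ} (hp : p.Prime) (h2 : p % 3 = 2) (hdvd : p ∣ N)
    (hnd : ¬ p ^ 2 ∣ N) : sols N = ∅ := by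
  rw [Finset.eq_empty_iff_forall_notMem]
  intro q hq
  rw [mem_sols] at hq
  have hpd : (p : ℤ) ∣ q.1 ^ 2 - q.1 * q.2 + q.2 ^ 2 := by
    rw [hq]; exact_mod_cast Int.natCast_dvd_natCast.mpr hdvd
  obtain ⟨ha, hb⟩ := Eis.inert_dvd p hp h2 hpd
  obtain ⟨a', ha'⟩ := ha
  obtain ⟨b', hb'⟩ := hb
  apply hnd
  have h2d : ((p : ℤ)) ^ 2 ∣ (N : ℤ) := by
    rw [← hq, ha', hb']
    exact ⟨a' ^ 2 - a' * b' + b' ^ 2, by ring⟩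
  exact_mod_cast Int.natCast_dvd_natCast.mp (by exact_mod_cast h2d)

lemma card_sols_inert_sq {p M : ℕ} (hp : p.Prime) (h2 : p % 3 = 2) :
    (sols (p ^ 2 * M)).card = (sols M).card := by
  have hppos : (0 : ℤ) < (p : ℤ) := by exact_mod_cast hp.pos
  refine Finset.card_bij' (fun q _ => (q.1 / (p : ℤ), q.2 / (p : ℤ)))
    (fun q _ => ((p : ℤ) * q.1, (p : ℤ) * q.2)) ?_ ?_ ?_ ?_
  · intro q hq
    rw [mem_sols] at hq ⊢
    dsimp only
    push_cast at hq
    have hpd : (p : ℤ) ∣ q.1 ^ 2 - q.1 * q.2 + q.2 ^ 2 := by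
      rw [hq]; exact ⟨p * M, by ring⟩
    obtain ⟨⟨a', ha'⟩, ⟨b', hb'⟩⟩ := Eis.inert_dvd p hp h2 hpd
    have e1 : q.1 / (p : ℤ) = a' := by rw [ha']; exact Int.mul_ediv_cancel_left _ hppos.ne'
    have e2 : q.2 / (p : ℤ) = b' := by rw [hb']; exact Int.mul_ediv_cancel_left _ hppos.ne'
    rw [e1, e2]
    rw [ha', hb'] at hq
    have h9 : (p : ℤ) ^ 2 * (a' ^ 2 - a' * b' + b' ^ 2) = (p : ℤ) ^ 2 * (M : ℤ) := by
      linear_combination hq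
    exact mul_left_cancel₀ (by positivity) h9
  · intro q hq
    rw [mem_sols] at hq ⊢
    dsimp only
    push_cast
    linear_combination ((p : ℤ)) ^ 2 * hq
  · intro q hq
    rw [mem_sols] at hq
    push_cast at hq
    have hpd : (p : ℤ) ∣ q.1 ^ 2 - q.1 * q.2 + q.2 ^ 2 := by
      rw [hq]; exact ⟨p * M, by ring⟩
    obtain ⟨⟨a', ha'⟩, ⟨b', hb'⟩⟩ := Eis.inert_dvd p hp h2 hpd
    dsimp only
    ext <;> dsimp only
    · rw [ha', Int.mul_ediv_cancel_left _ hppos.ne', ← ha']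
    · rw [hb', Int.mul_ediv_cancel_left _ hppos.ne', ← hb']
  · intro q hq
    dsimp only
    ext <;> dsimp only <;> rw [Int.mul_ediv_cancel_left _ hppos.ne']
namespace Eis

lemma conj_conj (z : Eis) : conj (conj z) = z := by ext <;> simp

lemma norm_pow (z : Eis) (n : ℕ) : norm (z ^ n) = norm z ^ n := by
  induction n with
  | zero => simp
  | succ n ih => rw [pow_succ, pow_succ, norm_mul, ih]

lemma norm_dvd {z w : Eis} (h : z ∣ w) : norm z ∣ norm w := by
  obtain ⟨t, rfl⟩ := h
  exact ⟨norm t, by rw [norm_mul]⟩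

def toEis : ℤ × ℤ ↪ Eis :=
  ⟨fun q => ⟨q.1, q.2⟩, by rintro ⟨a, b⟩ ⟨c, d⟩ h; simpa [Prod.ext_iff, Eis.mk.injEq] using h⟩

/-- Solutions as Eisenstein integers. -/
noncomputable def solsE (N : ℕ) : Finset Eis := (sols N).map toEis

lemma mem_solsE {N : ℕ} {z : Eis} : z ∈ solsE N ↔ norm z = N := by
  unfold solsE
  rw [Finset.mem_map]
  constructor
  · rintro ⟨q, hq, rfl⟩
    rw [mem_sols] at hq
    exact hq
  · intro h
    exact ⟨(z.u, z.v), mem_sols.mpr (by simpa [norm] using h), rfl⟩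

lemma card_solsE (N : ℕ) : (solsE N).card = (sols N).card := Finset.card_map _

section Split

variable {p : ℕ} (hp : p.Prime) (h1 : p % 3 = 1) {π : Eis} (hπ : norm π = p)

lemma intPrime {p : ℕ} (hp : p.Prime) : Prime (p : ℤ) :=
  Int.prime_iff_natAbs_prime.mpr (by simpa using hp)

include hp hπ in
lemma prime_pi : Prime π :=
  prime_of_norm_prime (by rw [hπ]; exact intPrime hp)

include hp hπ in
lemma prime_pi_conj : Prime (conj π) :=
  prime_of_norm_prime (by rw [norm_conj, hπ]; exact intPrime hp)

include hp hπ in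
lemma pi_ne_zero : π ≠ 0 := by
  intro h
  rw [h, norm_zero] at hπ
  exact_mod_cast hp.pos.ne (by exact_mod_cast hπ)

include hp h1 hπ in
lemma not_pi_dvd_conj : ¬ π ∣ conj π := by
  intro hdvd
  have hprime := prime_pi hp hπ
  have hIntP : Prime (p : ℤ) := intPrime hp
  have hsub : π - conj π = (⟨π.v, 0⟩ : Eis) * ⟨1, 2⟩ := by ext <;> simp <;> ring
  have hdvd2 : π ∣ (⟨π.v, 0⟩ : Eis) * ⟨1, 2⟩ := hsub ▸ dvd_sub (dvd_refl π) hdvd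
  have hp3 : p ≠ 3 := by omega
  rcases hprime.2.2 _ _ hdvd2 with h' | h'
  · have hnd := norm_dvd h'
    rw [hπ] at hnd
    have hv2 : (p : ℤ) ∣ π.v ^ 2 := by
      have : norm (⟨π.v, 0⟩ : Eis) = π.v ^ 2 := by rw [norm]; ring
      rwa [this] at hnd
    have hpv : (p : ℤ) ∣ π.v := hIntP.dvd_of_dvd_pow hv2
    have hsum : π + conj π = (⟨2 * π.u - π.v, 0⟩ : Eis) := by ext <;> simp <;> ring
    have hdvd3 : π ∣ (⟨2 * π.u - π.v, 0⟩ : Eis) := hsum ▸ dvd_add (dvd_refl π) hdvd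
    have hnd3 := norm_dvd hdvd3
    rw [hπ] at hnd3
    have h3 : (p : ℤ) ∣ (2 * π.u - π.v) ^ 2 := by
      have : norm (⟨2 * π.u - π.v, 0⟩ : Eis) = (2 * π.u - π.v) ^ 2 := by rw [norm]; ring
      rwa [this] at hnd3
    have hps : (p : ℤ) ∣ 2 * π.u - π.v := hIntP.dvd_of_dvd_pow h3
    have hpu : (p : ℤ) ∣ π.u := by
      have h2a : (p : ℤ) ∣ 2 * π.u := by
        obtain ⟨m, hm⟩ := hpv
        obtain ⟨n, hn⟩ := hps
        exact ⟨n + m, by linarith⟩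
      rcases hIntP.2.2 _ _ h2a with h'' | h''
      · exfalso
        have hle := Int.le_of_dvd (by norm_num) h''
        have h2 := hp.two_le
        have hp2 : p = 2 := by omega
        omega
      · exact h''
    obtain ⟨a', ha'⟩ := hpu
    obtain ⟨b', hb'⟩ := hpv
    have hX : norm π = (p : ℤ) ^ 2 * (a' ^ 2 - a' * b' + b' ^ 2) := by
      simp only [norm, ha', hb']
      ring
    have hdd : ((p : ℤ)) ^ 2 ∣ (p : ℤ) := by
      have h' : ((p : ℤ)) ^ 2 ∣ norm π := ⟨_, hX⟩
      rwa [hπ] at h'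
    have hle := Int.le_of_dvd (by exact_mod_cast hp.pos) hdd
    have h2 := hp.two_le
    nlinarith
  · have hnd := norm_dvd h'
    rw [hπ] at hnd
    have h3 : (p : ℤ) ∣ 3 := by
      have : norm (⟨1, 2⟩ : Eis) = 3 := by rw [norm]; ring
      rwa [this] at hnd
    have hdn : p ∣ 3 := by exact_mod_cast h3
    exact hp3 ((Nat.prime_dvd_prime_iff_eq hp Nat.prime_three).mp hdn)

include hp hπ in
lemma p_eq_pi_mul_conj : (p : Eis) = π * conj π := by
  rw [mul_conj, hπ]
  push_cast
  rfl

include hp h1 hπ in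
lemma decomp (M : ℕ) (hM : ¬ p ∣ M) :
    ∀ v (z : Eis), norm z = (p : ℤ) ^ v * M →
      ∃ j, j ≤ v ∧ ∃ w, norm w = M ∧ z = π ^ j * (conj π) ^ (v - j) * w := by
  intro v
  induction v with
  | zero =>
    intro z hz
    exact ⟨0, le_refl 0, z, by simpa using hz, by simp⟩
  | succ v ih =>
    intro z hz
    have hprime := prime_pi hp hπ
    have hpne : ((p : ℤ)) ≠ 0 := by exact_mod_cast hp.pos.ne'
    have hdvd : π ∣ z * conj z := by
      have h1' : (p : Eis) ∣ z * conj z := by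
        rw [mul_conj, hz]
        exact ⟨(((p : ℤ) ^ v * M : ℤ) : Eis), by push_cast; ring⟩
      exact dvd_trans (Dvd.intro _ (p_eq_pi_mul_conj hp hπ).symm) h1'
    rcases hprime.2.2 _ _ hdvd with hc | hc
    · obtain ⟨z₁, rfl⟩ := hc
      have hz₁ : norm z₁ = (p : ℤ) ^ v * M := by
        rw [norm_mul, hπ] at hz
        have : (p : ℤ) * norm z₁ = (p : ℤ) * ((p : ℤ) ^ v * M) := by
          rw [hz]; ring
        exact mul_left_cancel₀ hpne this
      obtain ⟨j, hj, w, hw, rfl⟩ := ih z₁ hz₁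
      refine ⟨j + 1, by omega, w, hw, ?_⟩
      have he : v + 1 - (j + 1) = v - j := by omega
      rw [he, pow_succ]
      ring
    · obtain ⟨t, ht⟩ := hc
      have hzc : z = conj π * conj t := by
        have := congrArg conj ht
        rwa [conj_conj, map_mul] at this
      have ht₁ : norm (conj t) = (p : ℤ) ^ v * M := by
        have : norm z = norm (conj π) * norm (conj t) := by rw [hzc, norm_mul]
        rw [norm_conj, hπ] at this
        have h2 : (p : ℤ) * norm (conj t) = (p : ℤ) * ((p : ℤ) ^ v * M) := by
          rw [← this, hz]; ring
        exact mul_left_cancel₀ hpne h2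
      obtain ⟨j, hj, w, hw, hw2⟩ := ih (conj t) ht₁
      refine ⟨j, by omega, w, hw, ?_⟩
      have he : v + 1 - j = (v - j) + 1 := by omega
      rw [hzc, hw2, he, pow_succ]
      ring

include hp h1 hπ in
lemma card_solsE_split (M : ℕ) (hM : ¬ p ∣ M) (v : ℕ) :
    (solsE (p ^ v * M)).card = (v + 1) * (solsE M).card := by
  have hprime := prime_pi hp hπ
  have hπ0 := pi_ne_zero hp hπ
  have hπc0 : conj π ≠ 0 := pi_ne_zero hp (show norm (conj π) = (p : ℤ) by rw [norm_conj, hπ])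
  have hnotdvd := not_pi_dvd_conj hp h1 hπ
  have hpdM : ∀ w : Eis, norm w = (M : ℤ) → ¬ π ∣ w := by
    intro w hw hdvd
    have hnd := norm_dvd hdvd
    rw [hπ, hw] at hnd
    exact hM (by exact_mod_cast hnd)
  have helper : ∀ j k (w w' : Eis), j ≤ k → norm w = M → norm w' = M →
      π ^ j * (conj π) ^ (v - j) * w = π ^ k * (conj π) ^ (v - k) * w' → j = k ∧ w = w' := by
    intro j k w w' hjk hw hw' heq
    have hjeqk : j = k := by
      by_contra hne
      have hlt : j < k := lt_of_le_of_ne hjk hne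
      have heq2 : π ^ j * ((conj π) ^ (v - j) * w) =
          π ^ j * (π ^ (k - j) * ((conj π) ^ (v - k) * w')) := by
        have hsplit : π ^ k = π ^ j * π ^ (k - j) := by
          rw [← pow_add]
          congr 1
          omega
        calc π ^ j * ((conj π) ^ (v - j) * w) = π ^ j * (conj π) ^ (v - j) * w := by ring
        _ = π ^ k * (conj π) ^ (v - k) * w' := heq
        _ = π ^ j * π ^ (k - j) * (conj π) ^ (v - k) * w' := by rw [hsplit]
        _ = π ^ j * (π ^ (k - j) * ((conj π) ^ (v - k) * w')) := by ring
      have hcan : (conj π) ^ (v - j) * w = π ^ (k - j) * ((conj π) ^ (v - k) * w') :=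
        mul_left_cancel₀ (pow_ne_zero _ hπ0) heq2
      have hπdvd : π ∣ (conj π) ^ (v - j) * w := by
        rw [hcan]
        exact dvd_mul_of_dvd_left (dvd_pow_self π (by omega : k - j ≠ 0)) _
      rcases hprime.2.2 _ _ hπdvd with h' | h'
      · exact hnotdvd (hprime.dvd_of_dvd_pow h')
      · exact hpdM w hw h'
    subst hjeqk
    refine ⟨rfl, ?_⟩
    exact mul_left_cancel₀ (mul_ne_zero (pow_ne_zero _ hπ0) (pow_ne_zero _ hπc0)) heq
  have hbij : (Finset.range (v + 1) ×ˢ solsE M).card = (solsE (p ^ v * M)).card := by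
    refine Finset.card_bij (fun a _ => π ^ a.1 * (conj π) ^ (v - a.1) * a.2) ?_ ?_ ?_
    · intro a ha
      rw [Finset.mem_product, Finset.mem_range] at ha
      obtain ⟨h1a, h2a⟩ := ha
      rw [mem_solsE] at h2a ⊢
      rw [norm_mul, norm_mul, norm_pow, norm_pow, hπ, norm_conj, hπ, h2a]
      push_cast
      rw [← pow_add]
      congr 2
      omega
    · intro a ha b hb heq
      rw [Finset.mem_product, Finset.mem_range, mem_solsE] at ha hb
      rcases le_total a.1 b.1 with hle | hle
      · obtain ⟨hj, hw⟩ := helper a.1 b.1 a.2 b.2 hle ha.2 hb.2 heq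
        exact Prod.ext hj hw
      · obtain ⟨hj, hw⟩ := helper b.1 a.1 b.2 a.2 hle hb.2 ha.2 heq.symm
        exact Prod.ext hj.symm hw.symm
    · intro z hz
      rw [mem_solsE] at hz
      obtain ⟨j, hj, w, hw, rfl⟩ := decomp hp h1 hπ M hM v z (by rw [hz]; push_cast; ring)
      refine ⟨(j, w), ?_, rfl⟩
      rw [Finset.mem_product, Finset.mem_range]
      exact ⟨by omega, mem_solsE.mpr hw⟩
  rw [← hbij, Finset.card_product, Finset.card_range]

end Split
end Eis

lemma card_sols_split {p : ℕ} (hp : p.Prime) (h1 : p % 3 = 1) (M : ℕ) (hM : ¬ p ∣ M) (v : ℕ) :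
    (sols (p ^ v * M)).card = (v + 1) * (sols M).card := by
  obtain ⟨π, hπ⟩ := Eis.exists_norm_eq p hp h1
  rw [← Eis.card_solsE, ← Eis.card_solsE]
  exact Eis.card_solsE_split hp h1 hπ M hM v
open Finset ArithmeticFunction
open scoped ArithmeticFunction.zeta

/-- The sign function attached to the quadratic character mod 3. -/
def eps : ZMod 3 → ℤ := fun x => if x = 1 then 1 else if x = 2 then -1 else 0

lemma eps_mul : ∀ x y : ZMod 3, eps (x * y) = eps x * eps y := by decide

/-- The nontrivial character mod 3 as an arithmetic function. -/
def chi : ArithmeticFunction ℤ :=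
  ⟨fun n => eps (n : ZMod 3), by simp only [Nat.cast_zero]; decide⟩

lemma chi_apply (n : ℕ) : chi n = eps (n : ZMod 3) := rfl

lemma chi_mul (m n : ℕ) : chi (m * n) = chi m * chi n := by
  rw [chi_apply, chi_apply, chi_apply, Nat.cast_mul, eps_mul]

lemma chi_isMultiplicative : chi.IsMultiplicative :=
  ⟨by rw [chi_apply]; norm_num [eps], fun _ => chi_mul _ _⟩

lemma chi_pow (p i : ℕ) : chi (p ^ i) = chi p ^ i := by
  induction i with
  | zero => simpa using chi_isMultiplicative.1
  | succ i ih => rw [pow_succ, pow_succ, chi_mul, ih]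

lemma chi_of_mod1 {n : ℕ} (h : n % 3 = 1) : chi n = 1 := by
  rw [chi_apply, ← ZMod.natCast_mod, h]
  decide

lemma chi_of_mod2 {n : ℕ} (h : n % 3 = 2) : chi n = -1 := by
  rw [chi_apply, ← ZMod.natCast_mod, h]
  decide

/-- The divisor sum of `chi`. -/
def S (N : ℕ) : ℤ := ∑ d ∈ N.divisors, chi d

lemma S_eq ( N : ℕ) : S N = ((↑ζ * chi : ArithmeticFunction ℤ)) N :=
  (coe_zeta_mul_apply).symm

lemma S_isMultiplicative : (↑ζ * chi : ArithmeticFunction ℤ).IsMultiplicative :=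
  (isMultiplicative_zeta.natCast).mul chi_isMultiplicative

lemma S_mul_coprime {m n : ℕ} (h : m.Coprime n) : S (m * n) = S m * S n := by
  rw [S_eq, S_eq, S_eq, S_isMultiplicative.map_mul_of_coprime h]

lemma S_prime_pow {p : ℕ} (hp : p.Prime) (v : ℕ) :
    S (p ^ v) = ∑ i ∈ range (v + 1), chi p ^ i := by
  unfold S
  rw [Nat.sum_divisors_prime_pow hp]
  exact Finset.sum_congr rfl fun i _ => chi_pow p i

/-- `S` versus the difference of divisor counts. -/
lemma S_eq_diff (N : ℕ) :
    S N = ((N.divisors.filter fun d => d % 3 = 1).card : ℤ) -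
          ((N.divisors.filter fun d => d % 3 = 2).card : ℤ) := by
  unfold S
  rw [← Finset.sum_filter_add_sum_filter_not N.divisors (fun d => d % 3 = 1)]
  have h1 : ∑ d ∈ N.divisors.filter (fun d => d % 3 = 1), chi d
      = ((N.divisors.filter fun d => d % 3 = 1).card : ℤ) := by
    rw [Finset.sum_congr rfl (fun d hd => chi_of_mod1 (Finset.mem_filter.mp hd).2)]
    simp
  have h2 : ∑ d ∈ N.divisors.filter (fun d => ¬ d % 3 = 1), chi d
      = -((N.divisors.filter fun d => d % 3 = 2).card : ℤ) := by
    rw [← Finset.sum_filter_add_sum_filter_not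
      (N.divisors.filter (fun d => ¬ d % 3 = 1)) (fun d => d % 3 = 2)]
    have e1 : (N.divisors.filter (fun d => ¬ d % 3 = 1)).filter (fun d => d % 3 = 2)
        = N.divisors.filter (fun d => d % 3 = 2) := by
      rw [Finset.filter_filter]
      exact Finset.filter_congr fun d _ => by omega
    have e2 : ∑ d ∈ ((N.divisors.filter (fun d => ¬ d % 3 = 1)).filter
        (fun d => ¬ d % 3 = 2)), chi d = 0 := by
      refine Finset.sum_eq_zero fun d hd => ?_
      rw [Finset.mem_filter, Finset.mem_filter] at hd
      have h0 : d % 3 = 0 := by omega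
      rw [chi_apply, ← ZMod.natCast_mod, h0]
      decide
    rw [e1, e2, add_zero]
    rw [Finset.sum_congr rfl (fun d hd => chi_of_mod2 (Finset.mem_filter.mp hd).2)]
    simp
  rw [h1, h2]
  ring

lemma S_one : S 1 = 1 := by
  unfold S
  simp [Nat.divisors_one, chi_apply]
  decide

/-- Removing one factor of `3` does not change the filtered divisor counts. -/
lemma filter_divisors_three (N : ℕ) (h3 : 3 ∣ N) (hN : N ≠ 0) (j : ℕ) (hj : j = 1 ∨ j = 2) :
    N.divisors.filter (fun d => d % 3 = j) = (N / 3).divisors.filter (fun d => d % 3 = j) := by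
  ext d
  rw [Finset.mem_filter, Finset.mem_filter, Nat.mem_divisors, Nat.mem_divisors]
  constructor
  · rintro ⟨⟨hdN, -⟩, hdj⟩
    refine ⟨⟨?_, ?_⟩, hdj⟩
    · have hnd : ¬ (3 ∣ d) := by omega
      have hco : Nat.Coprime 3 d := (Nat.Prime.coprime_iff_not_dvd Nat.prime_three).mpr hnd
      have hN3 : N = 3 * (N / 3) := (Nat.mul_div_cancel' h3).symm
      rw [hN3] at hdN
      exact (Nat.Coprime.dvd_of_dvd_mul_left hco.symm hdN)
    · omega
  · rintro ⟨⟨hdN, -⟩, hdj⟩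
    exact ⟨⟨hdN.trans (Nat.div_dvd_of_dvd h3), hN⟩, hdj⟩
lemma S_inert_pow {p : ℕ} (hp : p.Prime) (h2 : p % 3 = 2) (v : ℕ) (hv : 2 ≤ v) :
    S (p ^ v) = S (p ^ (v - 2)) := by
  rw [S_prime_pow hp, S_prime_pow hp, chi_of_mod2 h2]
  have hv' : v - 2 + 1 + 1 + 1 = v + 1 := by omega
  rw [← hv', Finset.sum_range_succ, Finset.sum_range_succ]
  have hz : ((-1 : ℤ)) ^ (v - 2 + 1) + (-1 : ℤ) ^ (v - 2 + 1 + 1) = 0 := by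
    rw [pow_succ ((-1 : ℤ)) (v - 2 + 1)]
    ring
  linarith [hz]

lemma S_inert_one' {p : ℕ} (hp : p.Prime) (h2 : p % 3 = 2) : S (p ^ 1) = 0 := by
  rw [S_prime_pow hp, chi_of_mod2 h2]
  simp [Finset.sum_range_succ]

lemma main_count : ∀ N : ℕ, 0 < N → ((sols N).card : ℤ) = 6 * S N := by
  intro N
  induction N using Nat.strong_induction_on with
  | _ N ih =>
    intro hN
    by_cases hN1 : N = 1
    · subst hN1
      rw [sols_one, S_one]
      norm_num
    have h2 : 2 ≤ N := by omega
    set p := N.minFac with hpdef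
    have hp : p.Prime := Nat.minFac_prime (by omega)
    have hpd : p ∣ N := N.minFac_dvd
    have hple := hp.two_le
    rcases show p % 3 = 0 ∨ p % 3 = 1 ∨ p % 3 = 2 by omega with h3 | h3 | h3
    · -- p = 3
      have hp3 : p = 3 := by
        have h3d : 3 ∣ p := by omega
        exact ((Nat.prime_dvd_prime_iff_eq Nat.prime_three hp).mp h3d).symm
      have h3N : 3 ∣ N := hp3 ▸ hpd
      have hq : N = 3 * (N / 3) := (Nat.mul_div_cancel' h3N).symm
      have hR : (sols N).card = (sols (N / 3)).card := by
        conv_lhs => rw [hq]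
        exact card_sols_three_mul (N / 3)
      have hS1 : S N = S (N / 3) := by
        rw [S_eq_diff, S_eq_diff,
          filter_divisors_three N h3N (by omega) 1 (Or.inl rfl),
          filter_divisors_three N h3N (by omega) 2 (Or.inr rfl)]
      rw [hR, hS1]
      exact ih _ (by omega) (by omega)
    · -- split case
      set v := N.factorization p with hvdef
      have hv1 : 0 < v := hp.factorization_pos_of_dvd (by omega) hpd
      have hNM : p ^ v * (N / p ^ v) = N := Nat.ordProj_mul_ordCompl_eq_self N p
      set M := N / p ^ v with hMdef
      have hMnd : ¬ p ∣ M := Nat.not_dvd_ordCompl hp (by omega)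
      have hMpos : 0 < M := Nat.ordCompl_pos p (by omega)
      have hpvge : 2 ≤ p ^ v := le_trans hple (Nat.le_self_pow hv1.ne' p)
      have h2M : 2 * M ≤ N := by
        rw [← hNM]
        exact Nat.mul_le_mul_right M hpvge
      have hMlt : M < N := by omega
      have hcop : Nat.Coprime (p ^ v) M :=
        Nat.Coprime.pow_left _ ((hp.coprime_iff_not_dvd).mpr hMnd)
      have hSM : S N = S (p ^ v) * S M := by
        conv_lhs => rw [← hNM]
        exact S_mul_coprime hcop
      have hR : (sols N).card = (v + 1) * (sols M).card := by
        conv_lhs => rw [← hNM]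
        exact card_sols_split hp h3 M hMnd v
      have hSp : S (p ^ v) = ((v : ℤ) + 1) := by
        rw [S_prime_pow hp, chi_of_mod1 h3]
        simp
      calc ((sols N).card : ℤ) = ((v : ℤ) + 1) * (sols M).card := by rw [hR]; push_cast; ring
      _ = ((v : ℤ) + 1) * (6 * S M) := by rw [ih M hMlt hMpos]
      _ = 6 * (S (p ^ v) * S M) := by rw [hSp]; ring
      _ = 6 * S N := by rw [← hSM]
    · -- inert case
      set v := N.factorization p with hvdef
      have hv1 : 0 < v := hp.factorization_pos_of_dvd (by omega) hpd
      have hNM : p ^ v * (N / p ^ v) = N := Nat.ordProj_mul_ordCompl_eq_self N p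
      set M := N / p ^ v with hMdef
      have hMnd : ¬ p ∣ M := Nat.not_dvd_ordCompl hp (by omega)
      have hMpos : 0 < M := Nat.ordCompl_pos p (by omega)
      have hcop : Nat.Coprime (p ^ v) M :=
        Nat.Coprime.pow_left _ ((hp.coprime_iff_not_dvd).mpr hMnd)
      by_cases hsq : p ^ 2 ∣ N
      · have hv2 : 2 ≤ v :=
          (Nat.Prime.pow_dvd_iff_le_factorization hp (by omega)).mp hsq
        have hq : N = p ^ 2 * (N / p ^ 2) := (Nat.mul_div_cancel' hsq).symm
        have hp2pos : 0 < p ^ 2 := by positivity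
        have hNp2pos : 0 < N / p ^ 2 := Nat.div_pos (Nat.le_of_dvd (by omega) hsq) hp2pos
        have hlt : N / p ^ 2 < N := Nat.div_lt_self (by omega) (by nlinarith)
        have hR : (sols N).card = (sols (N / p ^ 2)).card := by
          conv_lhs => rw [hq]
          exact card_sols_inert_sq hp h3
        have hdiv : N / p ^ 2 = p ^ (v - 2) * M := by
          have hsplit : p ^ v * M = p ^ 2 * (p ^ (v - 2) * M) := by
            have hw : v = (v - 2) + 2 := by omega
            calc p ^ v * M = p ^ ((v - 2) + 2) * M := by rw [← hw]
            _ = p ^ 2 * (p ^ (v - 2) * M) := by rw [pow_add]; ring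
          rw [← hNM, hsplit, Nat.mul_div_cancel_left _ hp2pos]
        have hcop2 : Nat.Coprime (p ^ (v - 2)) M :=
          Nat.Coprime.pow_left _ ((hp.coprime_iff_not_dvd).mpr hMnd)
        have hSS : S N = S (N / p ^ 2) := by
          conv_lhs => rw [← hNM]
          rw [hdiv, S_mul_coprime hcop, S_mul_coprime hcop2, S_inert_pow hp h3 v hv2]
        rw [hR, hSS]
        exact ih _ hlt hNp2pos
      · have hveq : v = 1 := by
          by_contra hne
          exact hsq ((Nat.Prime.pow_dvd_iff_le_factorization hp (by omega)).mpr (by omega))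
        have hR : sols N = ∅ := sols_inert_one hp h3 hpd hsq
        have hSS : S N = 0 := by
          conv_lhs => rw [← hNM]
          rw [S_mul_coprime hcop, hveq, S_inert_one' hp h3, zero_mul]
        rw [hR, hSS]
        simp

/-- For every positive integer `N`, the number of pairs `(a,b) ∈ ℤ × ℤ` with
`a² − a·b + b² = N` equals `6 · (d₁(N) − d₂(N))`, where `dⱼ(N)` is the number of
positive divisors of `N` congruent to `j` modulo `3`. -/
theorem count_QF_eq_six_mul_divisor_difference (N : ℕ) (hN : 0 < N) :
    (Set.ncard {p : ℤ × ℤ | p.1 ^ 2 - p.1 * p.2 + p.2 ^ 2 = (N : ℤ)} : ℤ) =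
      6 * (((N.divisors.filter fun d => d % 3 = 1).card : ℤ) -
           ((N.divisors.filter fun d => d % 3 = 2).card : ℤ)) := by
  have hset : {p : ℤ × ℤ | p.1 ^ 2 - p.1 * p.2 + p.2 ^ 2 = (N : ℤ)} = ↑(sols N) := by
    ext q
    simp only [Set.mem_setOf_eq, Finset.coe_sort_coe, Finset.mem_coe, mem_sols]
  rw [hset, Set.ncard_coe_finset, main_count N hN, S_eq_diff]
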